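/- arXiv:0802.2793 — 3 statements merged into one kernel-verified Lean document; each statement's English description precedes it below -/
import Mathlib

section
/- Given a monomial t and finitely many monomials t_1, ..., t_r in T^n, and a term ordering σ such that t >_σ t_i for all i, there exists a vector V of strictly positive integer weights on the variables x_1, ..., x_n such that deg_V(t) > deg_V(t_i) for all i = 1, ..., r. -/
section Aux
variable {n : ℕ} (σ : (Fin n → ℕ) → (Fin n → ℕ) → Prop)

/-- `d : ℤⁿ` is `σ`-positive: it is a difference `a - b` with `b <_σ a`. -/
def SigmaPos (d : Fin n → ℤ) : Prop :=
  ∃ a b : Fin n → ℕ, (∀ k, (a k : ℤ) - b k = d k) ∧ σ b a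

variable {σ}
variable (htrans : ∀ a b c, σ a b → σ b c → σ a c)
    (hirr : ∀ a, ¬ σ a a)
    (hadd : ∀ a b c, σ a b → σ (a + c) (b + c))

include hirr in
theorem sigmaPos_not_zero : ¬ SigmaPos σ (0 : Fin n → ℤ) := by
  rintro ⟨a, b, hab, hs⟩
  have : a = b := by
    funext k
    have := hab k
    simp only [Pi.zero_apply, sub_eq_zero] at this
    exact_mod_cast this
  subst this
  exact hirr a hs

include htrans hadd in
theorem sigmaPos_add {d e : Fin n → ℤ} (hd : SigmaPos σ d) (he : SigmaPos σ e) :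
    SigmaPos σ (d + e) := by
  obtain ⟨a, b, hab, hs⟩ := hd
  obtain ⟨a', b', hab', hs'⟩ := he
  refine ⟨a + a', b + b', fun k => ?_, ?_⟩
  · have := hab k; have := hab' k
    simp only [Pi.add_apply] at *
    push_cast
    omega
  · have h1 : σ (b + b') (a + b') := hadd _ _ _ hs
    have h2 : σ (b' + a) (a' + a) := hadd _ _ _ hs'
    rw [add_comm b' a, add_comm a' a] at h2
    exact htrans _ _ _ h1 h2

include htrans hadd in
theorem sigmaPos_nsmul {d : Fin n → ℤ} (hd : SigmaPos σ d) :
    ∀ c : ℕ, 0 < c → SigmaPos σ ((c : ℤ) • d)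
  | 0, h => absurd h (lt_irrefl 0)
  | 1, _ => by simpa using hd
  | (c + 2), _ => by
      have := sigmaPos_add htrans hadd (sigmaPos_nsmul hd (c + 1) (Nat.succ_pos c)) hd
      convert this using 1
      push_cast
      module

include htrans hadd in
theorem sigmaPos_smul {d : Fin n → ℤ} (hd : SigmaPos σ d) {c : ℤ} (hc : 0 < c) :
    SigmaPos σ (c • d) := by
  have := sigmaPos_nsmul htrans hadd hd c.toNat (by omega)
  rwa [Int.toNat_of_nonneg hc.le] at this

end Aux



theorem exists_between_lists (lbs ubs : List ℚ)
    (h : ∀ x ∈ lbs, ∀ y ∈ ubs, x < y) :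
    ∃ q : ℚ, (∀ x ∈ lbs, x < q) ∧ (∀ y ∈ ubs, q < y) := by
  rcases eq_or_ne lbs [] with rfl | hl
  · rcases eq_or_ne ubs [] with rfl | hu
    · exact ⟨0, by simp, by simp⟩
    · have hne : ubs.toFinset.Nonempty := by
        rwa [List.toFinset_nonempty_iff]
      refine ⟨ubs.toFinset.min' hne - 1, by simp, fun y hy => ?_⟩
      have := ubs.toFinset.min'_le y (List.mem_toFinset.mpr hy)
      linarith
  · have hlne : lbs.toFinset.Nonempty := by rwa [List.toFinset_nonempty_iff]
    set a := lbs.toFinset.max' hlne with ha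
    have hamem : a ∈ lbs := List.mem_toFinset.mp (lbs.toFinset.max'_mem hlne)
    have hale : ∀ x ∈ lbs, x ≤ a := fun x hx =>
      lbs.toFinset.le_max' x (List.mem_toFinset.mpr hx)
    rcases eq_or_ne ubs [] with rfl | hu
    · exact ⟨a + 1, fun x hx => by have := hale x hx; linarith, by simp⟩
    · have hune : ubs.toFinset.Nonempty := by rwa [List.toFinset_nonempty_iff]
      set b := ubs.toFinset.min' hune with hb
      have hbmem : b ∈ ubs := List.mem_toFinset.mp (ubs.toFinset.min'_mem hune)
      have hble : ∀ y ∈ ubs, b ≤ y := fun y hy =>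
        ubs.toFinset.min'_le y (List.mem_toFinset.mpr hy)
      have hab : a < b := h a hamem b hbmem
      refine ⟨(a + b) / 2, fun x hx => ?_, fun y hy => ?_⟩
      · have := hale x hx; linarith
      · have := hble y hy; linarith


theorem wlin {n : ℕ} (W : Fin n → ℚ) (c₁ c₂ : ℤ) (d e : Fin n → ℤ) :
    ∑ k, (((c₁ • d + c₂ • e) k : ℤ) : ℚ) * W k
      = c₁ * ∑ k, (d k : ℚ) * W k + c₂ * ∑ k, (e k : ℚ) * W k := by
  simp only [Pi.add_apply, Pi.smul_apply, smul_eq_mul, Finset.mul_sum]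
  rw [← Finset.sum_add_distrib]
  apply Finset.sum_congr rfl
  intro k _
  push_cast
  ring

theorem sum_update {n : ℕ} (V : Fin n → ℚ) (j : Fin n) (q : ℚ) (d : Fin n → ℤ) :
    ∑ k, (d k : ℚ) * (Function.update V j q) k
      = (∑ k, (d k : ℚ) * (Function.update V j 0) k) + d j * q := by
  rw [← Finset.sum_erase_add _ _ (Finset.mem_univ j),
    ← Finset.sum_erase_add _ (fun k => (d k : ℚ) * (Function.update V j 0) k) (Finset.mem_univ j)]
  simp only [Function.update_self]
  have : ∑ k ∈ Finset.univ.erase j, (d k : ℚ) * (Function.update V j q) k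
      = ∑ k ∈ Finset.univ.erase j, (d k : ℚ) * (Function.update V j 0) k := by
    apply Finset.sum_congr rfl
    intro k hk
    rw [Function.update_of_ne (Finset.ne_of_mem_erase hk),
      Function.update_of_ne (Finset.ne_of_mem_erase hk)]
  rw [this]
  ring

theorem sum_update_zero {n : ℕ} (V : Fin n → ℚ) (j : Fin n) (d : Fin n → ℤ)
    (hd : d j = 0) :
    ∑ k, (d k : ℚ) * (Function.update V j 0) k = ∑ k, (d k : ℚ) * V k := by
  apply Finset.sum_congr rfl
  intro k _
  rcases eq_or_ne k j with rfl | hk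
  · simp [hd]
  · rw [Function.update_of_ne hk]

theorem gordan {n : ℕ} {σ : (Fin n → ℕ) → (Fin n → ℕ) → Prop}
    (htrans : ∀ a b c, σ a b → σ b c → σ a c)
    (hirr : ∀ a, ¬ σ a a)
    (hadd : ∀ a b c, σ a b → σ (a + c) (b + c)) :
    ∀ (m : ℕ) (l : List (Fin n → ℤ)),
      (∀ d ∈ l, SigmaPos σ d) →
      (∀ d ∈ l, ∀ k : Fin n, m ≤ (k : ℕ) → d k = 0) →
      ∃ V : Fin n → ℚ, ∀ d ∈ l, 0 < ∑ k, (d k : ℚ) * V k := by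
  intro m
  induction m with
  | zero =>
    intro l hP hsupp
    refine ⟨0, fun d hd => absurd (hP d hd) ?_⟩
    have : d = 0 := funext fun k => hsupp d hd k (Nat.zero_le _)
    rw [this]
    exact sigmaPos_not_zero hirr
  | succ m ih =>
    intro l hP hsupp
    by_cases hmn : m < n
    · set j : Fin n := ⟨m, hmn⟩ with hj
      set zer := l.filter (fun d => d j = 0) with hzer
      set pos := l.filter (fun d => 0 < d j) with hpos
      set neg := l.filter (fun d => d j < 0) with hneg
      set combos := pos.flatMap
        (fun d => neg.map (fun e => (-(e j)) • d + (d j) • e)) with hcombos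
      -- facts about members of combos
      have hcomboP : ∀ c ∈ combos, SigmaPos σ c ∧ c j = 0 ∧
          (∀ k : Fin n, m + 1 ≤ (k : ℕ) → c k = 0) := by
        intro c hc
        rw [hcombos] at hc
        simp only [List.mem_flatMap, List.mem_map] at hc
        obtain ⟨d, hd, e, he, rfl⟩ := hc
        rw [hpos, List.mem_filter] at hd
        rw [hneg, List.mem_filter] at he
        obtain ⟨hdl, hdj⟩ := hd
        obtain ⟨hel, hej⟩ := he
        simp only [decide_eq_true_eq] at hdj hej
        refine ⟨?_, ?_, ?_⟩
        · exact sigmaPos_add htrans hadd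
            (sigmaPos_smul htrans hadd (hP d hdl) (by omega))
            (sigmaPos_smul htrans hadd (hP e hel) hdj)
        · simp only [Pi.add_apply, Pi.smul_apply, smul_eq_mul]
          ring
        · intro k hk
          simp only [Pi.add_apply, Pi.smul_apply, smul_eq_mul,
            hsupp d hdl k (by omega), hsupp e hel k (by omega), mul_zero, add_zero]
      have hzerfacts : ∀ d ∈ zer, d ∈ l ∧ d j = 0 := by
        intro d hd
        rw [hzer, List.mem_filter] at hd
        exact ⟨hd.1, by simpa using hd.2⟩
      -- apply induction hypothesis
      obtain ⟨V', hV'⟩ := ih (zer ++ combos)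
        (by
          intro d hd
          rcases List.mem_append.mp hd with hd | hd
          · exact hP d (hzerfacts d hd).1
          · exact (hcomboP d hd).1)
        (by
          intro d hd k hk
          rcases Nat.lt_or_ge (k : ℕ) (m + 1) with hk' | hk'
          · have hkj : k = j := by
              apply Fin.ext
              simp only [hj]
              omega
            rcases List.mem_append.mp hd with hd | hd
            · rw [hkj]; exact (hzerfacts d hd).2
            · rw [hkj]; exact (hcomboP d hd).2.1
          · rcases List.mem_append.mp hd with hd | hd
            · exact hsupp d (hzerfacts d hd).1 k hk'
            · exact (hcomboP d hd).2.2 k hk')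
      set W := Function.update V' j 0 with hW
      set w : (Fin n → ℤ) → ℚ := fun d => ∑ k, (d k : ℚ) * W k with hw
      -- each combo gives a positive value of w
      have hcombow : ∀ d ∈ pos, ∀ e ∈ neg,
          0 < (-(e j) : ℚ) * w d + (d j : ℚ) * w e := by
        intro d hd e he
        have hmem : (-(e j)) • d + (d j) • e ∈ zer ++ combos := by
          apply List.mem_append_right
          rw [hcombos]
          simp only [List.mem_flatMap, List.mem_map]
          exact ⟨d, hd, e, he, rfl⟩
        have h1 := hV' _ hmem
        have hcj : ((-(e j)) • d + (d j) • e) j = 0 := by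
          simp only [Pi.add_apply, Pi.smul_apply, smul_eq_mul]; ring
        have h2 : ∑ k, ((((-(e j)) • d + (d j) • e) k : ℤ) : ℚ) * W k
            = ∑ k, ((((-(e j)) • d + (d j) • e) k : ℤ) : ℚ) * V' k := by
          rw [hW]
          exact sum_update_zero V' j _ hcj
        have h3 := wlin W (-(e j)) (d j) d e
        simp only [hw]
        push_cast at h3 ⊢
        linarith [h1, h2, h3]
      -- choose the weight of the variable j
      set lbs := pos.map (fun d => -(w d) / ((d j : ℚ))) with hlbs
      set ubs := neg.map (fun e => (w e) / ((-(e j) : ℚ))) with hubs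
      obtain ⟨q, hq1, hq2⟩ := exists_between_lists lbs ubs (by
        intro x hx y hy
        rw [hlbs, List.mem_map] at hx
        rw [hubs, List.mem_map] at hy
        obtain ⟨d, hd, rfl⟩ := hx
        obtain ⟨e, he, rfl⟩ := hy
        have hdj : 0 < d j := by
          rw [hpos, List.mem_filter] at hd; simpa using hd.2
        have hej : e j < 0 := by
          rw [hneg, List.mem_filter] at he; simpa using he.2
        have hdjQ : (0 : ℚ) < (d j : ℚ) := by exact_mod_cast hdj
        have hejQ : (0 : ℚ) < (-(e j) : ℚ) := by
          have : (e j : ℚ) < 0 := by exact_mod_cast hej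
          linarith
        rw [div_lt_div_iff₀ hdjQ hejQ]
        have := hcombow d hd e he
        push_cast at this ⊢
        nlinarith)
      refine ⟨Function.update V' j q, ?_⟩
      intro d hd
      have hsum : ∑ k, (d k : ℚ) * (Function.update V' j q) k = w d + (d j : ℚ) * q := by
        rw [hw, hW]
        exact sum_update V' j q d
      rw [hsum]
      rcases lt_trichotomy (d j) 0 with hdj | hdj | hdj
      · have hmem : w d / ((-(d j) : ℚ)) ∈ ubs := by
          rw [hubs, List.mem_map]
          exact ⟨d, by rw [hneg, List.mem_filter]; exact ⟨hd, by simpa using hdj⟩, rfl⟩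
        have := hq2 _ hmem
        have hdjQ : (0 : ℚ) < (-(d j) : ℚ) := by
          have : (d j : ℚ) < 0 := by exact_mod_cast hdj
          push_cast
          linarith
        rw [lt_div_iff₀ hdjQ] at this
        push_cast at this ⊢
        nlinarith
      · have hmem : d ∈ zer ++ combos := by
          apply List.mem_append_left
          rw [hzer, List.mem_filter]
          exact ⟨hd, by simpa using hdj⟩
        have h1 := hV' d hmem
        have h2 : w d = ∑ k, (d k : ℚ) * V' k := by
          rw [hw, hW]; exact sum_update_zero V' j d hdj
        rw [h2, hdj]
        push_cast
        linarith
      · have hmem : -(w d) / ((d j : ℚ)) ∈ lbs := by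
          rw [hlbs, List.mem_map]
          exact ⟨d, by rw [hpos, List.mem_filter]; exact ⟨hd, by simpa using hdj⟩, rfl⟩
        have := hq1 _ hmem
        have hdjQ : (0 : ℚ) < (d j : ℚ) := by exact_mod_cast hdj
        rw [div_lt_iff₀ hdjQ] at this
        nlinarith
    · exact ih l hP (fun d hd k _ => hsupp d hd k (by omega))

/-- Bayer's trick: if `t >_σ tᵢ` for a term ordering `σ` (written `σ a b` for
`a <_σ b`) and finitely many monomials `t₁, …, t_r`, then there is a system `V`
of strictly positive integer weights with `deg_V t > deg_V tᵢ` for all `i`.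
Monomials are represented by their exponent vectors in `Fin n → ℕ`. -/
theorem exists_positive_weights {n : ℕ}
    (σ : (Fin n → ℕ) → (Fin n → ℕ) → Prop)
    (htrans : ∀ a b c, σ a b → σ b c → σ a c)
    (hirr : ∀ a, ¬ σ a a)
    (htotal : ∀ a b, a ≠ b → σ a b ∨ σ b a)
    (hadd : ∀ a b c, σ a b → σ (a + c) (b + c))
    (hmin : ∀ a : Fin n → ℕ, a ≠ 0 → σ 0 a)
    (t : Fin n → ℕ) (r : ℕ) (ts : Fin r → Fin n → ℕ)
    (h : ∀ i, σ (ts i) t) :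
    ∃ V : Fin n → ℕ, (∀ k, 0 < V k) ∧
      ∀ i, ∑ k, ts i k * V k < ∑ k, t k * V k := by
  classical
  set L : List (Fin n → ℤ) :=
    (List.ofFn fun i : Fin r => fun k => (t k : ℤ) - ts i k) ++
    (List.ofFn fun j : Fin n => fun k => if k = j then (1 : ℤ) else 0) with hL
  have hPL : ∀ d ∈ L, SigmaPos σ d := by
    intro d hd
    rw [hL, List.mem_append] at hd
    rcases hd with hd | hd <;> rw [List.mem_ofFn] at hd <;> obtain ⟨i, rfl⟩ := hd
    · exact ⟨t, ts i, fun k => rfl, h i⟩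
    · refine ⟨fun k => if k = i then 1 else 0, 0,
        fun k => by by_cases hk : k = i <;> simp [hk], hmin _ ?_⟩
      intro h0
      have := congrFun h0 i
      simp at this
  obtain ⟨V, hV⟩ := gordan htrans hirr hadd n L hPL
    (fun d _ k hk => absurd hk (by have := k.isLt; omega))
  have hVpos : ∀ j, 0 < V j := by
    intro j
    have hmem : (fun k => if k = j then (1 : ℤ) else 0) ∈ L := by
      rw [hL]
      exact List.mem_append_right _ (by rw [List.mem_ofFn]; exact ⟨j, rfl⟩)
    have := hV _ hmem
    simpa [ite_mul, Finset.sum_ite_eq'] using this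
  have hkey : ∀ i, ∑ k, (ts i k : ℚ) * V k < ∑ k, (t k : ℚ) * V k := by
    intro i
    have hmem : (fun k => (t k : ℤ) - ts i k) ∈ L := by
      rw [hL]
      exact List.mem_append_left _ (by rw [List.mem_ofFn]; exact ⟨i, rfl⟩)
    have h1 := hV _ hmem
    have h2 : ∑ k, (((t k : ℤ) - ts i k : ℤ) : ℚ) * V k
        = (∑ k, (t k : ℚ) * V k) - ∑ k, (ts i k : ℚ) * V k := by
      rw [← Finset.sum_sub_distrib]
      apply Finset.sum_congr rfl
      intro k _
      push_cast
      ring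
    rw [h2] at h1
    linarith
  set N : ℕ := ∏ k, (V k).den with hNdef
  have hN : 0 < N := Finset.prod_pos (fun k _ => (V k).den_pos)
  set c : Fin n → ℕ := fun k => N / (V k).den with hc
  have hck : ∀ k, (V k).den * c k = N := fun k =>
    Nat.mul_div_cancel' (Finset.dvd_prod_of_mem _ (Finset.mem_univ k))
  set Wt : Fin n → ℕ := fun k => (V k).num.toNat * c k with hWt
  have hnum : ∀ k, 0 < (V k).num := fun k => Rat.num_pos.mpr (hVpos k)
  have hWtQ : ∀ k, (Wt k : ℚ) = V k * N := by
    intro k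
    have hd0 : ((V k).den : ℚ) ≠ 0 := by
      exact_mod_cast (V k).den_pos.ne'
    have hmul : V k * ((V k).den : ℚ) = ((V k).num : ℚ) := by
      have := Rat.num_div_den (V k)
      rw [div_eq_iff hd0] at this
      linarith
    have htn : (((V k).num.toNat : ℕ) : ℚ) = ((V k).num : ℚ) := by
      have h4 : (((V k).num.toNat : ℕ) : ℤ) = (V k).num := Int.toNat_of_nonneg (hnum k).le
      exact_mod_cast h4
    calc (Wt k : ℚ) = ((V k).num : ℚ) * c k := by
          rw [hWt]
          push_cast
          rw [htn]
      _ = V k * (((V k).den : ℚ) * c k) := by rw [← hmul]; ring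
      _ = V k * N := by rw [← Nat.cast_mul, hck k]
  have hWtpos : ∀ k, 0 < Wt k := by
    intro k
    rw [hWt]
    have h1 : 0 < (V k).num.toNat := by have := hnum k; omega
    have h2 : 0 < c k := by
      have := hck k
      have := (V k).den_pos
      nlinarith
    exact Nat.mul_pos h1 h2
  refine ⟨Wt, hWtpos, fun i => ?_⟩
  have hNQ : (0 : ℚ) < N := by exact_mod_cast hN
  have final : ∑ k, (ts i k : ℚ) * (Wt k : ℚ) < ∑ k, (t k : ℚ) * (Wt k : ℚ) := by
    simp only [hWtQ]
    calc ∑ k, (ts i k : ℚ) * (V k * N) = (∑ k, (ts i k : ℚ) * V k) * N := by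
          rw [Finset.sum_mul]
          exact Finset.sum_congr rfl (fun k _ => by ring)
      _ < (∑ k, (t k : ℚ) * V k) * N := mul_lt_mul_of_pos_right (hkey i) hNQ
      _ = ∑ k, (t k : ℚ) * (V k * N) := by
          rw [Finset.sum_mul]
          exact Finset.sum_congr rfl (fun k _ => by ring)
  exact_mod_cast final
end

section
/- Let P = K[x_1,...,x_n] and Q = K[x_1,...,x_n,y_1,...,y_m] be polynomial rings over a field K, let g_1,...,g_t ∈ Q generate an ideal J, and suppose there exist polynomials f_1,...,f_m ∈ P such that y_i − f_i ∈ J for all i. Then the contraction J ∩ P is generated by the substituted polynomials g_1(x, f), ..., g_t(x, f), where each y_i is replaced by f_i(x). -/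
open MvPolynomial

/-- Let `P = K[x]`, `Q = K[x, y]`, let `g₁, …, g_t` generate an ideal `J ⊆ Q`,
and suppose `yᵢ - fᵢ(x) ∈ J` for polynomials `fᵢ ∈ P`. Then the contraction
`J ∩ P` (the preimage of `P ↪ Q`) is generated by the
substituted polynomials `gⱼ(x, f)`. -/
theorem contraction_generated_by_substitution
    {K : Type*} [Field K] {n m t : ℕ}
    (g : Fin t → MvPolynomial (Fin n ⊕ Fin m) K)
    (f : Fin m → MvPolynomial (Fin n) K)
    (J : Ideal (MvPolynomial (Fin n ⊕ Fin m) K))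
    (hJ : J = Ideal.span (Set.range g))
    (hf : ∀ i, X (Sum.inr i) - rename Sum.inl (f i) ∈ J) :
    J.comap (rename (R := K) Sum.inl : MvPolynomial (Fin n) K →ₐ[K]
        MvPolynomial (Fin n ⊕ Fin m) K) =
      Ideal.span (Set.range fun j => aeval (Sum.elim X f) (g j)) := by
  set φ : MvPolynomial (Fin n ⊕ Fin m) K →ₐ[K] MvPolynomial (Fin n) K :=
    aeval (Sum.elim X f) with hφ
  -- key: every q is congruent to rename Sum.inl (φ q) modulo J
  have key : ∀ q : MvPolynomial (Fin n ⊕ Fin m) K,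
      q - rename Sum.inl (φ q) ∈ J := by
    intro q
    induction q using MvPolynomial.induction_on with
    | C a => simp [hφ]
    | add p q hp hq =>
        have := J.add_mem hp hq
        convert this using 1
        simp only [map_add]
        ring
    | mul_X p s hp =>
        have hx : X s - rename Sum.inl (φ (X s)) ∈ J := by
          cases s with
          | inl j => simp [hφ]
          | inr i => simpa [hφ] using hf i
        have : (p - rename Sum.inl (φ p)) * X s
            + rename Sum.inl (φ p) * (X s - rename Sum.inl (φ (X s))) ∈ J :=
          J.add_mem (J.mul_mem_right _ hp) (J.mul_mem_left _ hx)
        convert this using 1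
        simp only [map_mul]
        ring
  have hφr : ∀ p : MvPolynomial (Fin n) K, φ (rename Sum.inl p) = p := by
    intro p
    rw [hφ, aeval_rename]
    exact aeval_X_left_apply p
  apply le_antisymm
  · intro p hp
    rw [Ideal.mem_comap] at hp
    have hmap : Ideal.map (φ : MvPolynomial (Fin n ⊕ Fin m) K →+* MvPolynomial (Fin n) K) J
        = Ideal.span (Set.range fun j => aeval (Sum.elim X f) (g j)) := by
      rw [hJ, Ideal.map_span]
      congr 1
      rw [← Set.range_comp]
      rfl
    have : φ (rename Sum.inl p) ∈ Ideal.map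
        (φ : MvPolynomial (Fin n ⊕ Fin m) K →+* MvPolynomial (Fin n) K) J :=
      Ideal.mem_map_of_mem _ hp
    rwa [hφr, hmap] at this
  · rw [Ideal.span_le]
    rintro _ ⟨j, rfl⟩
    rw [SetLike.mem_coe, Ideal.mem_comap]
    have hg : g j ∈ J := by
      rw [hJ]; exact Ideal.subset_span ⟨j, rfl⟩
    have := J.sub_mem hg (key (g j))
    simpa [hφ] using this
end

section
/- If O is a σ-cornercut for some term ordering σ on T^n, then there exists a system V of strictly positive integer weights such that O is a V-cornercut. -/
/-- `O` is an order ideal: a finite set of monomials (exponent vectors)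
closed under taking divisors. -/
def IsOrderIdeal {n : ℕ} (O : Finset (Fin n → ℕ)) : Prop :=
  ∀ t ∈ O, ∀ s : Fin n → ℕ, (∀ i, s i ≤ t i) → s ∈ O

/-- `b` lies in the border `∂O = (x₁·O ∪ ⋯ ∪ xₙ·O) \ O`. -/
def InBorder {n : ℕ} (O : Finset (Fin n → ℕ)) (b : Fin n → ℕ) : Prop :=
  b ∉ O ∧ ∃ t ∈ O, ∃ k, b = t + Pi.single k 1

/-- `b` is a corner of `O`: `b ∉ O` and every proper divisor `b/xₖ` lies in `O`,
i.e. `b` is a minimal generator of the monoideal `Tⁿ \ O`. -/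
def IsCornerOf {n : ℕ} (O : Finset (Fin n → ℕ)) (b : Fin n → ℕ) : Prop :=
  b ∉ O ∧ ∀ k, 0 < b k → b - Pi.single k 1 ∈ O


namespace CCAux

abbrev Vec (n : ℕ) := Fin n → ℚ

def dot {n : ℕ} (v d : Vec n) : ℚ := ∑ i, v i * d i

def combo {n : ℕ} (l : List (Vec n × ℚ)) : Vec n :=
  fun i => (l.map fun e => e.2 * e.1 i).sum

@[simp] lemma combo_nil {n : ℕ} (i : Fin n) : combo ([] : List (Vec n × ℚ)) i = 0 := rfl

@[simp] lemma combo_cons {n : ℕ} (e : Vec n × ℚ) (l : List (Vec n × ℚ)) (i : Fin n) :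
    combo (e :: l) i = e.2 * e.1 i + combo l i := rfl

/-- A dual certificate of infeasibility. -/
def HasCert {n : ℕ} (D : List (Vec n)) : Prop :=
  ∃ l : List (Vec n × ℚ), (∀ e ∈ l, e.1 ∈ D ∧ 0 ≤ e.2) ∧ (∃ e ∈ l, 0 < e.2) ∧
    ∀ i, combo l i ≤ 0

lemma exists_between_lists (S T : List ℚ) (h : ∀ a ∈ S, ∀ b ∈ T, a < b) :
    ∃ w : ℚ, (∀ a ∈ S, a < w) ∧ (∀ b ∈ T, w < b) := by
  classical
  by_cases hS : S = []
  · by_cases hT : T = []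
    · exact ⟨0, by simp [hS], by simp [hT]⟩
    · have hTne : T.toFinset.Nonempty := by
        simpa [List.toFinset_eq_empty_iff] using hT
      refine ⟨T.toFinset.min' hTne - 1, by simp [hS], fun b hb => ?_⟩
      have := T.toFinset.min'_le b (by simpa using hb)
      linarith
  · have hSne : S.toFinset.Nonempty := by
      simpa [List.toFinset_eq_empty_iff] using hS
    by_cases hT : T = []
    · refine ⟨S.toFinset.max' hSne + 1, fun a ha => ?_, by simp [hT]⟩
      have := S.toFinset.le_max' a (by simpa using ha)
      linarith
    · have hTne : T.toFinset.Nonempty := by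
        simpa [List.toFinset_eq_empty_iff] using hT
      have hmax : S.toFinset.max' hSne ∈ S := by
        simpa using S.toFinset.max'_mem hSne
      have hmin : T.toFinset.min' hTne ∈ T := by
        simpa using T.toFinset.min'_mem hTne
      obtain ⟨w, hw1, hw2⟩ := exists_between (h _ hmax _ hmin)
      refine ⟨w, fun a ha => ?_, fun b hb => ?_⟩
      · exact lt_of_le_of_lt (S.toFinset.le_max' a (by simpa using ha)) hw1
      · exact lt_of_lt_of_le hw2 (T.toFinset.min'_le b (by simpa using hb))

end CCAux
namespace CCAux

def pr {n : ℕ} (d : Vec (n+1)) : Vec n := fun i => d i.castSucc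

def fmvec {n : ℕ} (p q : Vec (n+1)) : Vec (n+1) :=
  p (Fin.last n) • q + (-(q (Fin.last n))) • p

@[simp] lemma fmvec_apply {n : ℕ} (p q : Vec (n+1)) (i : Fin (n+1)) :
    fmvec p q i = p (Fin.last n) * q i - q (Fin.last n) * p i := by
  simp [fmvec]; ring

lemma fmvec_last {n : ℕ} (p q : Vec (n+1)) : fmvec p q (Fin.last n) = 0 := by
  simp [mul_comm]

def fmElim {n : ℕ} (D : List (Vec (n+1))) : List (Vec n) :=
  (D.filter fun d => decide (d (Fin.last n) = 0)).map pr ++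
    ((D.filter fun d => decide (0 < d (Fin.last n))).product
      (D.filter fun d => decide (d (Fin.last n) < 0))).map
      (fun pq => pr (fmvec pq.1 pq.2))

lemma cert_lift {n : ℕ} (D : List (Vec (n+1))) (h : HasCert (fmElim D)) : HasCert D := by
  classical
  obtain ⟨l', hl', hpos, hcombo⟩ := h
  -- build a lifted certificate
  suffices hmain : ∀ l'' : List (Vec n × ℚ), (∀ e ∈ l'', e.1 ∈ fmElim D ∧ 0 ≤ e.2) →
      ∃ l : List (Vec (n+1) × ℚ), (∀ e ∈ l, e.1 ∈ D ∧ 0 ≤ e.2) ∧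
        (∀ i : Fin n, combo l i.castSucc = combo l'' i) ∧
        combo l (Fin.last n) = 0 ∧
        ((∃ e ∈ l'', 0 < e.2) → ∃ e ∈ l, 0 < e.2) by
    obtain ⟨l, h1, h2, h3, h4⟩ := hmain l' hl'
    refine ⟨l, h1, h4 hpos, fun i => ?_⟩
    refine Fin.lastCases ?_ ?_ i
    · simp [h3]
    · intro j; rw [h2 j]; exact hcombo j
  intro l''
  induction l'' with
  | nil => intro _; exact ⟨[], by simp, by simp, by simp, by simp⟩
  | cons e l₀ ih =>
    intro hl''
    obtain ⟨l₀', hA, hB, hC, hD⟩ := ih (fun x hx => hl'' x (List.mem_cons_of_mem _ hx))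
    obtain ⟨hmem, hc⟩ := hl'' e (List.mem_cons_self)
    rcases List.mem_append.1 hmem with hz | hr
    · -- from Z
      obtain ⟨z, hz1, hz2⟩ := List.mem_map.1 hz
      rw [List.mem_filter, decide_eq_true_iff] at hz1
      refine ⟨(z, e.2) :: l₀', ?_, ?_, ?_, ?_⟩
      · rintro x hx
        rcases List.mem_cons.1 hx with rfl | hx
        · exact ⟨hz1.1, hc⟩
        · exact hA x hx
      · intro i; simp [hB i, ← hz2, pr]
      · simp [hC, hz1.2]
      · rintro ⟨x, hx, hx2⟩
        rcases List.mem_cons.1 hx with rfl | hx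
        · exact ⟨(z, x.2), List.mem_cons_self, hx2⟩
        · obtain ⟨y, hy1, hy2⟩ := hD ⟨x, hx, hx2⟩
          exact ⟨y, List.mem_cons_of_mem _ hy1, hy2⟩
    · -- from pairs
      obtain ⟨pq, hpq1, hpq2⟩ := List.mem_map.1 hr
      obtain ⟨hp, hq⟩ := List.pair_mem_product.1 hpq1
      rw [List.mem_filter, decide_eq_true_iff] at hp hq
      set p := pq.1
      set q := pq.2
      refine ⟨(q, e.2 * p (Fin.last n)) :: (p, e.2 * (-(q (Fin.last n)))) :: l₀', ?_, ?_, ?_, ?_⟩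
      · rintro x hx
        rcases List.mem_cons.1 hx with rfl | hx
        · exact ⟨hq.1, mul_nonneg hc hp.2.le⟩
        rcases List.mem_cons.1 hx with rfl | hx
        · exact ⟨hp.1, mul_nonneg hc (by linarith [hq.2])⟩
        · exact hA x hx
      · intro i
        simp only [combo_cons, hB i, ← hpq2, pr, fmvec_apply]
        ring
      · simp only [combo_cons, hC]
        ring
      · rintro ⟨x, hx, hx2⟩
        rcases List.mem_cons.1 hx with rfl | hx
        · exact ⟨(q, x.2 * p (Fin.last n)), List.mem_cons_self, mul_pos hx2 hp.2⟩
        · obtain ⟨y, hy1, hy2⟩ := hD ⟨x, hx, hx2⟩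
          exact ⟨y, List.mem_cons_of_mem _ (List.mem_cons_of_mem _ hy1), hy2⟩

end CCAux
namespace CCAux

theorem gordan : ∀ (n : ℕ) (D : List (Vec n)), ¬ HasCert D → ∃ v : Vec n, ∀ d ∈ D, 0 < dot v d := by
  intro n
  induction n with
  | zero =>
    intro D h
    cases D with
    | nil => exact ⟨0, by simp⟩
    | cons d D =>
      exfalso
      refine h ⟨[(d, 1)], ?_, ⟨(d, 1), List.mem_singleton_self _, one_pos⟩, fun i => i.elim0⟩
      rintro e he
      rcases List.mem_singleton.1 he with rfl
      exact ⟨List.mem_cons_self, zero_le_one⟩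
  | succ n IH =>
    intro D h
    have h' : ¬ HasCert (fmElim D) := fun hc => h (cert_lift D hc)
    obtain ⟨v', hv'⟩ := IH _ h'
    -- dot of lifted vector
    have hdot : ∀ (w : ℚ) (d : Vec (n+1)),
        dot (Fin.lastCases w v' : Vec (n+1)) d = dot v' (pr d) + w * d (Fin.last n) := by
      intro w d
      simp [dot, Fin.sum_univ_castSucc, pr]
    have hfm : ∀ p ∈ D.filter (fun d => decide (0 < d (Fin.last n))),
        ∀ q ∈ D.filter (fun d => decide (d (Fin.last n) < 0)),
        0 < p (Fin.last n) * dot v' (pr q) - q (Fin.last n) * dot v' (pr p) := by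
      intro p hp q hq
      have hmem : pr (fmvec p q) ∈ fmElim D := by
        apply List.mem_append_right
        exact List.mem_map.2 ⟨(p, q), List.pair_mem_product.2 ⟨hp, hq⟩, rfl⟩
      have := hv' _ hmem
      have heq : dot v' (pr (fmvec p q))
          = p (Fin.last n) * dot v' (pr q) - q (Fin.last n) * dot v' (pr p) := by
        simp only [dot, pr, fmvec_apply, Finset.mul_sum, ← Finset.sum_sub_distrib]
        exact Finset.sum_congr rfl fun i _ => by ring
      linarith [heq ▸ this]
    -- the two threshold lists
    obtain ⟨w, hw1, hw2⟩ := exists_between_lists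
      ((D.filter fun d => decide (0 < d (Fin.last n))).map
        (fun p => -(dot v' (pr p)) / p (Fin.last n)))
      ((D.filter fun d => decide (d (Fin.last n) < 0)).map
        (fun q => -(dot v' (pr q)) / q (Fin.last n)))
      (by
        rintro a ha b hb
        obtain ⟨p, hp, rfl⟩ := List.mem_map.1 ha
        obtain ⟨q, hq, rfl⟩ := List.mem_map.1 hb
        have hpL : 0 < p (Fin.last n) := by
          have := (List.mem_filter.1 hp).2; simpa using this
        have hqL : q (Fin.last n) < 0 := by
          have := (List.mem_filter.1 hq).2; simpa using this
        have key := hfm p hp q hq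
        have hrw : -dot v' (pr q) / q (Fin.last n) = dot v' (pr q) / (-(q (Fin.last n))) := by
          rw [div_neg, neg_div]
        rw [hrw, div_lt_div_iff₀ hpL (by linarith : (0:ℚ) < -(q (Fin.last n)))]
        nlinarith)
    refine ⟨Fin.lastCases w v', fun d hd => ?_⟩
    rcases lt_trichotomy (d (Fin.last n)) 0 with hneg | hzero | hposL
    · have hdf : d ∈ D.filter (fun d => decide (d (Fin.last n) < 0)) :=
        List.mem_filter.2 ⟨hd, by simpa using hneg⟩
      have := hw2 _ (List.mem_map.2 ⟨d, hdf, rfl⟩)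
      rw [lt_div_iff_of_neg hneg] at this
      rw [hdot]
      linarith
    · have hdf : d ∈ D.filter (fun d => decide (d (Fin.last n) = 0)) :=
        List.mem_filter.2 ⟨hd, by simpa using hzero⟩
      have hmem : pr d ∈ fmElim D := List.mem_append_left _ (List.mem_map.2 ⟨d, hdf, rfl⟩)
      have := hv' _ hmem
      rw [hdot, hzero]
      linarith
    · have hdf : d ∈ D.filter (fun d => decide (0 < d (Fin.last n))) :=
        List.mem_filter.2 ⟨hd, by simpa using hposL⟩
      have := hw1 _ (List.mem_map.2 ⟨d, hdf, rfl⟩)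
      rw [div_lt_iff₀ hposL] at this
      rw [hdot]
      linarith

end CCAux
namespace CCAux

section Sigma

variable {n : ℕ} {σ : (Fin n → ℕ) → (Fin n → ℕ) → Prop}
  (htrans : ∀ a b c, σ a b → σ b c → σ a c)
  (hirr : ∀ a, ¬ σ a a)
  (hadd : ∀ a b c, σ a b → σ (a + c) (b + c))
  (hmin : ∀ a : Fin n → ℕ, a ≠ 0 → σ 0 a)

/-- `a ≤σ b` -/
def SLE (σ : (Fin n → ℕ) → (Fin n → ℕ) → Prop) (a b : Fin n → ℕ) : Prop := a = b ∨ σ a b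

include htrans hadd

lemma sig_add2 {a b c d : Fin n → ℕ} (h1 : σ a b) (h2 : σ c d) : σ (a + c) (b + d) := by
  refine htrans _ _ _ (hadd a b c h1) ?_
  have := hadd c d b h2
  rwa [add_comm c b, add_comm d b] at this

lemma sig_add_sle {a b c d : Fin n → ℕ} (h1 : σ a b) (h2 : SLE σ c d) : σ (a + c) (b + d) := by
  rcases h2 with rfl | h2
  · exact hadd a b c h1
  · exact sig_add2 htrans hadd h1 h2

lemma sle_add {a b c d : Fin n → ℕ} (h1 : SLE σ a b) (h2 : SLE σ c d) :
    SLE σ (a + c) (b + d) := by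
  rcases h1 with rfl | h1
  · rcases h2 with rfl | h2
    · exact Or.inl rfl
    · refine Or.inr ?_
      have := hadd c d a h2
      rwa [add_comm c a, add_comm d a] at this
  · exact Or.inr (sig_add_sle htrans hadd h1 h2)

lemma sle_smul {t b : Fin n → ℕ} (h : σ t b) : ∀ m : ℕ, SLE σ (m • t) (m • b) := by
  intro m
  induction m with
  | zero => exact Or.inl (by simp [zero_nsmul])
  | succ k ih =>
    rw [succ_nsmul, succ_nsmul]
    exact sle_add htrans hadd ih (Or.inr h)

lemma sig_smul {t b : Fin n → ℕ} (h : σ t b) {m : ℕ} (hm : 0 < m) : σ (m • t) (m • b) := by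
  obtain ⟨k, rfl⟩ := Nat.exists_eq_succ_of_ne_zero hm.ne'
  rw [succ_nsmul, succ_nsmul]
  have := sig_add_sle htrans hadd h (sle_smul htrans hadd h k)
  rwa [add_comm t (k • t), add_comm b (k • b)] at this

end Sigma

lemma nat_of_den_dvd (q : ℚ) (N : ℕ) (h0 : 0 ≤ q) (hd : q.den ∣ N) :
    ∃ m : ℕ, (m : ℚ) = q * N := by
  obtain ⟨c, rfl⟩ := hd
  refine ⟨q.num.toNat * c, ?_⟩
  have hden : ((q.den : ℚ)) ≠ 0 := by positivity
  have hq : (q.num : ℚ) = q * q.den := (div_eq_iff hden).1 (Rat.num_div_den q)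
  have h1 : ((q.num.toNat : ℕ) : ℚ) = (q.num : ℚ) := by
    exact_mod_cast Int.toNat_of_nonneg (Rat.num_nonneg.2 h0)
  push_cast
  rw [h1, hq]
  ring

end CCAux
namespace CCAux

lemma no_cert {n : ℕ} {σ : (Fin n → ℕ) → (Fin n → ℕ) → Prop}
    (htrans : ∀ a b c, σ a b → σ b c → σ a c)
    (hirr : ∀ a, ¬ σ a a)
    (hadd : ∀ a b c, σ a b → σ (a + c) (b + c))
    (hmin : ∀ a : Fin n → ℕ, a ≠ 0 → σ 0 a)
    (D : List (Vec n))
    (hQ : ∀ d ∈ D, (∃ b t : Fin n → ℕ, σ t b ∧ ∀ i, d i = (b i : ℚ) - t i) ∨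
      (∃ k, ∀ i, d i = if i = k then 1 else 0)) :
    ¬ HasCert D := by
  rintro ⟨l, hl, hpos, hcombo⟩
  set M : ℕ := (l.map fun e => e.2.den).prod with hMdef
  have hM : 0 < M := by
    apply List.prod_pos
    intro x hx
    obtain ⟨e, _, rfl⟩ := List.mem_map.1 hx
    exact e.2.pos
  have hden : ∀ e ∈ l, e.2.den ∣ M := fun e he =>
    List.dvd_prod (List.mem_map.2 ⟨e, he, rfl⟩)
  have key : ∀ l₁ : List (Vec n × ℚ), (∀ e ∈ l₁, e.1 ∈ D ∧ 0 ≤ e.2 ∧ e.2.den ∣ M) →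
      ∃ B T E : Fin n → ℕ, (∀ i, combo l₁ i * M + (T i : ℚ) = B i + E i) ∧ SLE σ T B ∧
        ((∃ e ∈ l₁, 0 < e.2) → σ T B ∨ E ≠ 0) := by
    intro l₁
    induction l₁ with
    | nil =>
      intro _
      exact ⟨0, 0, 0, by simp, Or.inl rfl, by simp⟩
    | cons e l₀ ih =>
      intro hl₁
      obtain ⟨B₀, T₀, E₀, hEq₀, hsle₀, hstrict₀⟩ :=
        ih (fun x hx => hl₁ x (List.mem_cons_of_mem _ hx))
      obtain ⟨hmemD, hc, hdvd⟩ := hl₁ e (List.mem_cons_self)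
      obtain ⟨m, hm⟩ := nat_of_den_dvd e.2 M hc hdvd
      have hmpos : 0 < e.2 → 0 < m := by
        intro h2
        have : (0:ℚ) < m := by
          rw [hm]; positivity
        exact_mod_cast this
      rcases hQ e.1 hmemD with ⟨b, t, hσ, hd⟩ | ⟨k, hd⟩
      · refine ⟨m • b + B₀, m • t + T₀, E₀, ?_, ?_, ?_⟩
        · intro i
          have hEq₀i := hEq₀ i
          have hdi := hd i
          simp only [combo_cons, Pi.add_apply, Pi.smul_apply, smul_eq_mul]
          push_cast
          linear_combination hEq₀i + ((t i : ℚ) - b i) * hm + e.2 * M * hdi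
        · exact sle_add htrans hadd (sle_smul htrans hadd hσ m) hsle₀
        · rintro ⟨x, hx, hx2⟩
          rcases List.mem_cons.1 hx with rfl | hx
          · exact Or.inl (sig_add_sle htrans hadd (sig_smul htrans hadd hσ (hmpos hx2)) hsle₀)
          · rcases hstrict₀ ⟨x, hx, hx2⟩ with h | h
            · refine Or.inl ?_
              have h2 := sig_add_sle htrans hadd h (sle_smul htrans hadd hσ m)
              rwa [add_comm T₀ (m • t), add_comm B₀ (m • b)] at h2
            · exact Or.inr h
      · refine ⟨B₀, T₀, (fun i => (if i = k then m else 0) + E₀ i), ?_, hsle₀, ?_⟩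
        · intro i
          have hEq₀i := hEq₀ i
          have hdi := hd i
          simp only [combo_cons]
          rw [hd i]
          rcases eq_or_ne i k with rfl | hik
          · simp only [if_pos rfl]
            push_cast
            linear_combination hEq₀i - hm
          · simp only [if_neg hik]
            push_cast
            linear_combination hEq₀i
        · rintro ⟨x, hx, hx2⟩
          rcases List.mem_cons.1 hx with rfl | hx
          · refine Or.inr fun h0 => ?_
            have hm0 := hmpos hx2
            have hk := congrFun h0 k
            simp only [if_pos rfl, if_true, Pi.zero_apply] at hk
            omega
          · rcases hstrict₀ ⟨x, hx, hx2⟩ with h | h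
            · exact Or.inl h
            · refine Or.inr fun h0 => h ?_
              funext i
              have h2 := congrFun h0 i
              simp only [Pi.zero_apply] at h2 ⊢
              rcases eq_or_ne i k with rfl | hik
              · rw [if_pos rfl] at h2; omega
              · rw [if_neg hik] at h2; omega
  obtain ⟨B, T, E, hEq, hsle, hstrict⟩ := key l (fun e he => ⟨(hl e he).1, (hl e he).2, hden e he⟩)
  have hnat : ∀ i, B i + E i ≤ T i := by
    intro i
    have h1 : combo l i * M ≤ 0 :=
      mul_nonpos_of_nonpos_of_nonneg (hcombo i) (by positivity)
    have h2 : (B i : ℚ) + E i ≤ T i := by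
      have := hEq i; linarith
    exact_mod_cast h2
  have main : σ T B → False := by
    intro hTB
    have hBT : ∀ i, B i ≤ T i := fun i => le_trans (Nat.le_add_right _ _) (hnat i)
    rcases eq_or_ne B T with rfl | hne
    · exact hirr _ hTB
    · have hs : T = B + (T - B) := by
        funext i
        have := hBT i
        simp only [Pi.add_apply, Pi.sub_apply]
        omega
      have hs0 : T - B ≠ 0 := by
        intro h0
        apply hne
        funext i
        have := congrFun h0 i
        simp only [Pi.sub_apply, Pi.zero_apply] at this
        have := hBT i
        omega
      have : σ B T := by
        have h1 := hadd 0 (T - B) B (hmin _ hs0)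
        rw [zero_add, add_comm] at h1
        rwa [← hs] at h1
      exact hirr _ (htrans _ _ _ hTB this)
  rcases hstrict hpos with h | h
  · exact main h
  · rcases hsle with rfl | hTB
    · obtain ⟨i, hi⟩ := Function.ne_iff.1 h
      have h1 := hnat i
      simp only [Pi.zero_apply] at hi
      omega
    · exact main hTB

end CCAux

open CCAux in
/-- If `O` is a `σ`-cornercut for some term ordering `σ` (written `σ a b` for
`a <_σ b`), then there is a system `V` of strictly positive integer weights
such that `O` is a `V`-cornercut. -/
theorem exists_V_cornercut_of_cornercut {n : ℕ}
    (σ : (Fin n → ℕ) → (Fin n → ℕ) → Prop)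
    (htrans : ∀ a b c, σ a b → σ b c → σ a c)
    (hirr : ∀ a, ¬ σ a a)
    (htotal : ∀ a b, a ≠ b → σ a b ∨ σ b a)
    (hadd : ∀ a b c, σ a b → σ (a + c) (b + c))
    (hmin : ∀ a : Fin n → ℕ, a ≠ 0 → σ 0 a)
    (O : Finset (Fin n → ℕ)) (hO : IsOrderIdeal O) (hne : O.Nonempty)
    (hcc : ∀ b, IsCornerOf O b → ∀ t ∈ O, σ t b) :
    ∃ V : Fin n → ℕ, (∀ k, 0 < V k) ∧
      ∀ b, IsCornerOf O b → ∀ t ∈ O, ∑ i, t i * V i < ∑ i, b i * V i := by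
  classical
  have h0O : (0 : Fin n → ℕ) ∈ O := by
    obtain ⟨t, ht⟩ := hne
    exact hO t ht 0 (fun i => Nat.zero_le _)
  set C : Finset (Fin n → ℕ) :=
    ((O ×ˢ (Finset.univ : Finset (Fin n))).image fun p => p.1 + Pi.single p.2 1).filter
      (fun b => IsCornerOf O b) with hCdef
  have hCmem : ∀ b, IsCornerOf O b → b ∈ C := by
    intro b hb
    refine Finset.mem_filter.2 ⟨?_, hb⟩
    have hbne : b ≠ 0 := by rintro rfl; exact hb.1 h0O
    obtain ⟨k, hk⟩ := Function.ne_iff.1 hbne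
    simp only [Pi.zero_apply] at hk
    have hbk : 0 < b k := Nat.pos_of_ne_zero hk
    have ht : b - Pi.single k 1 ∈ O := hb.2 k hbk
    refine Finset.mem_image.2 ⟨(b - Pi.single k 1, k),
      Finset.mem_product.2 ⟨ht, Finset.mem_univ _⟩, ?_⟩
    funext i
    simp only [Pi.add_apply, Pi.sub_apply]
    rcases eq_or_ne i k with rfl | hik
    · simp only [Pi.single_eq_same]
      omega
    · simp [Pi.single_eq_of_ne hik]
  set Dtop : List (Vec n) :=
    (((C ×ˢ O).toList).map fun bt => fun i => ((bt.1 i : ℚ) - bt.2 i)) ++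
      ((List.finRange n).map fun k => fun i => if i = k then (1:ℚ) else 0) with hDdef
  have hQ : ∀ d ∈ Dtop, (∃ b t : Fin n → ℕ, σ t b ∧ ∀ i, d i = (b i : ℚ) - t i) ∨
      (∃ k, ∀ i, d i = if i = k then 1 else 0) := by
    intro d hd
    rcases List.mem_append.1 hd with h | h
    · obtain ⟨bt, hbt, rfl⟩ := List.mem_map.1 h
      have hmem := Finset.mem_product.1 (Finset.mem_toList.1 hbt)
      have hb : IsCornerOf O bt.1 := (Finset.mem_filter.1 hmem.1).2
      exact Or.inl ⟨bt.1, bt.2, hcc _ hb _ hmem.2, fun i => rfl⟩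
    · obtain ⟨k, _, rfl⟩ := List.mem_map.1 h
      exact Or.inr ⟨k, fun i => rfl⟩
  obtain ⟨v, hv⟩ := gordan n Dtop (no_cert htrans hirr hadd hmin Dtop hQ)
  have hvpos : ∀ k, 0 < v k := by
    intro k
    have hmem : (fun i => if i = k then (1:ℚ) else 0) ∈ Dtop :=
      List.mem_append_right _ (List.mem_map.2 ⟨k, List.mem_finRange k, rfl⟩)
    have := hv _ hmem
    simpa [dot, mul_ite] using this
  set N : ℕ := ∏ i, (v i).den with hNdef
  have hN : 0 < N := Finset.prod_pos fun i _ => (v i).pos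
  have hvn : ∀ i, ∃ m : ℕ, (m : ℚ) = v i * N := fun i =>
    nat_of_den_dvd (v i) N (hvpos i).le (Finset.dvd_prod_of_mem _ (Finset.mem_univ i))
  choose V hV using hvn
  refine ⟨V, ?_, ?_⟩
  · intro k
    have hq : (0:ℚ) < V k := by
      rw [hV k]
      have h1 := hvpos k
      have h2 : (0:ℚ) < N := by exact_mod_cast hN
      positivity
    exact_mod_cast hq
  · intro b hb t ht
    have hmem : (fun i => ((b i : ℚ) - t i)) ∈ Dtop :=
      List.mem_append_left _ (List.mem_map.2 ⟨(b, t),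
        Finset.mem_toList.2 (Finset.mem_product.2 ⟨hCmem b hb, ht⟩), rfl⟩)
    have hd := hv _ hmem
    have h1 : ∑ i, (v i * t i) < ∑ i, (v i * b i) := by
      have h2 : (0:ℚ) < ∑ i, (v i * b i) - ∑ i, (v i * t i) := by
        rw [← Finset.sum_sub_distrib]
        simpa [dot, mul_sub] using hd
      linarith
    have h2 : ((∑ i, t i * V i : ℕ) : ℚ) < ((∑ i, b i * V i : ℕ) : ℚ) := by
      push_cast
      have e1 : ∀ s : Fin n → ℕ, (∑ i, (s i : ℚ) * V i) = (∑ i, v i * s i) * N := by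
        intro s
        rw [Finset.sum_mul]
        refine Finset.sum_congr rfl fun i _ => ?_
        rw [hV i]; ring
      rw [e1 t, e1 b]
      have hNq : (0:ℚ) < N := by exact_mod_cast hN
      exact mul_lt_mul_of_pos_right h1 hNq
    exact_mod_cast h2
end
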